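/- arXiv:1605.04372 — 3 statements merged into one kernel-verified Lean document; each statement's English description precedes it below -/
import Mathlib

section
/- Let K be a field and g_1, ..., g_k nonzero polynomials in K[x] with b = gcd(g_1, ..., g_k). Write g_i = b * α_i. If h_1, ..., h_k are polynomials with deg h_i < deg g_i for all i and h_i * g_k = h_k * g_i for all i, then α_i divides h_i for every i; moreover h_i = h' * α_i for a single polynomial h' with deg h' < deg b. -/
/-!
Dividing out `b` turns `h i * g n = h n * g i` into `h i * α n = h n * α i`, and the `α i` are
coprime, so in the PID `K[X]` there is a Bézout relation `∑ c i * α i = 1`. Then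
`h' = ∑ c i * h i` satisfies `h i = h' * α i` for every `i`, and comparing degrees in
`h n = h' * α n`, `g n = b * α n` gives `deg h' < deg b`.
-/

open Polynomial

theorem exists_sum_mul_eq_one_of_gcd_eq_one {R ι : Type*} [CommRing R] [IsDomain R]
    [IsPrincipalIdealRing R] [NormalizedGCDMonoid R] [Fintype ι] {f : ι → R}
    (hf : Finset.univ.gcd f = 1) : ∃ c : ι → R, ∑ i, c i * f i = 1 := by
  rw [← Ideal.mem_span_range_iff_exists_fun]
  obtain ⟨d, hd⟩ := IsPrincipalIdealRing.principal (Ideal.span (Set.range f))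
  have hdvd : ∀ i, d ∣ f i := fun i =>
    Ideal.mem_span_singleton.mp <| by
      rw [← Ideal.submodule_span_eq, ← hd]; exact Ideal.subset_span ⟨i, rfl⟩
  have hunit : IsUnit d := isUnit_of_dvd_one (hf ▸ Finset.dvd_gcd fun i _ => hdvd i)
  rw [hd, Ideal.submodule_span_eq, Ideal.span_singleton_eq_top.mpr hunit]
  trivial

section CrossMultiplication

variable {R ι : Type*} [CommRing R] {α h : ι → R}

theorem eq_sum_mul_mul_of_cross_mul_eq {s : Finset ι} {c : ι → R}
    (hc : ∑ j ∈ s, c j * α j = 1) (hcross : ∀ i j, h i * α j = h j * α i) (i : ι) :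
    h i = (∑ j ∈ s, c j * h j) * α i :=
  calc h i = h i * ∑ j ∈ s, c j * α j := by rw [hc, mul_one]
    _ = ∑ j ∈ s, c j * h j * α i := by
      rw [Finset.mul_sum]
      exact Finset.sum_congr rfl fun j _ => by linear_combination c j * hcross i j
    _ = (∑ j ∈ s, c j * h j) * α i := by rw [Finset.sum_mul]

theorem cross_mul_eq_of_mul_eq_mul [IsDomain R] {n : ι} (hn : α n ≠ 0)
    (hrel : ∀ i, h i * α n = h n * α i) (i j : ι) : h i * α j = h j * α i :=
  mul_right_cancel₀ hn (by linear_combination α j * hrel i - α i * hrel j)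

end CrossMultiplication

/-- If `b = gcd (g 0, ..., g (k-1))`, `α i = g i / b`, and the `h i` satisfy
`deg h i < deg g i` and `h i * g (k-1) = h (k-1) * g i`, then `α i ∣ h i` for all `i`;
moreover `h i = h' * α i` for a single `h'` with `deg h' < deg b`. -/
theorem stmt_1 {K : Type*} [Field K] [DecidableEq K] (k : ℕ) (hk : 2 ≤ k)
    (g : Fin k → Polynomial K)
    (b : Polynomial K) (hb : b = Finset.univ.gcd g)
    (α : Fin k → Polynomial K) (hα : ∀ i, α i = g i / b)
    (h : Fin k → Polynomial K) (hdeg : ∀ i, (h i).degree < (g i).degree)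
    (hrel : ∀ i, h i * g ⟨k - 1, by omega⟩ = h ⟨k - 1, by omega⟩ * g i) :
    (∀ i, α i ∣ h i) ∧
      ∃ h' : Polynomial K, h'.degree < b.degree ∧ ∀ i, h i = h' * α i := by
  set n : Fin k := ⟨k - 1, by omega⟩
  have hgn : g n ≠ 0 := fun h0 => by simpa [h0] using hdeg n
  have hb0 : b ≠ 0 := hb ▸ fun h0 => hgn (Finset.gcd_eq_zero_iff.mp h0 n (Finset.mem_univ n))
  have hgα : ∀ i, g i = b * α i := fun i => by
    rw [hα i, EuclideanDomain.mul_div_cancel' hb0 (hb ▸ Finset.gcd_dvd (Finset.mem_univ i))]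
  have hαn : α n ≠ 0 := right_ne_zero_of_mul (hgα n ▸ hgn)
  have hgcd : Finset.univ.gcd α = 1 := by
    rw [funext hα, hb]
    exact Finset.gcd_div_eq_one (Finset.mem_univ n) hgn
  obtain ⟨c, hc⟩ := exists_sum_mul_eq_one_of_gcd_eq_one hgcd
  have hrelα : ∀ i, h i * α n = h n * α i := fun i => by
    have hreli := hrel i
    rw [hgα i, hgα n] at hreli
    exact mul_left_cancel₀ hb0 (by linear_combination hreli)
  have heq : ∀ i, h i = (∑ j, c j * h j) * α i :=
    eq_sum_mul_mul_of_cross_mul_eq hc (cross_mul_eq_of_mul_eq_mul hαn hrelα)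
  refine ⟨fun i => Dvd.intro_left _ (heq i).symm, _, ?_, heq⟩
  have hdeg_n := hdeg n
  rw [heq n, hgα n, degree_mul, degree_mul] at hdeg_n
  exact lt_of_add_lt_add_right hdeg_n
end

section
/- Let K be a field of characteristic zero and g_1, ..., g_k nonzero polynomials in K[x]. Let b = gcd(g_1, ..., g_k). Then gcd(b, b') = gcd(g_1, ..., g_k, g_1', ..., g_k'), where ' denotes the formal derivative. -/
/-!
Write `f i = b * h i` with `b = gcd f` and `gcd h = 1`. By the Leibniz rule
`D (f i) ≡ h i * D b` modulo `b`, so `gcd (b, D f₁, …, D fₖ) = gcd (b, h₁ D b, …, hₖ D b)`,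
and the last gcd is `gcd (b, D b)` because the `h i` are coprime.
-/

open Polynomial

theorem Derivation.gcd_apply_finsetGcd {R A ι : Type*} [CommSemiring R] [CommRing A]
    [Algebra R A] [NormalizedGCDMonoid A] (D : Derivation R A A) (s : Finset ι) (f : ι → A) :
    gcd (s.gcd f) (D (s.gcd f)) = gcd (s.gcd f) (s.gcd fun i => D (f i)) := by
  rcases s.eq_empty_or_nonempty with rfl | hs
  · simp
  obtain ⟨h, hfh, hh⟩ := s.extract_gcd f hs
  have hsub : ∀ i ∈ s, s.gcd f ∣ D (f i) - h i * D (s.gcd f) := fun i hi =>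
    ⟨D (h i), by rw [hfh i hi, D.leibniz, smul_eq_mul, smul_eq_mul]; ring⟩
  have hgcd : Associated (s.gcd fun i => h i * D (s.gcd f)) (D (s.gcd f)) := by
    simpa [hh] using s.gcd_mul_right' h (D (s.gcd f))
  rw [Finset.gcd_eq_of_dvd_sub hsub, hgcd.gcd_eq_right]

theorem stmt_2_general {K : Type*} [Field K] [DecidableEq K] (k : ℕ)
    (g : Fin k → Polynomial K)
    (b : Polynomial K) (hb : b = Finset.univ.gcd g) :
    Associated (gcd b (derivative b))
      (gcd (Finset.univ.gcd g) (Finset.univ.gcd fun i => derivative (g i))) := by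
  subst hb
  exact .of_eq ((derivative' (R := K)).gcd_apply_finsetGcd Finset.univ g)

/-- For nonzero polynomials `g i` over a field of characteristic zero, with
`b = gcd (g 0, ..., g (k-1))`, one has `gcd b b' = gcd (g 0, ..., g (k-1), g 0', ..., g (k-1)')`
up to units. -/
theorem stmt_2 {K : Type*} [Field K] [CharZero K] [DecidableEq K] (k : ℕ)
    (g : Fin k → Polynomial K) (hg : ∀ i, g i ≠ 0)
    (b : Polynomial K) (hb : b = Finset.univ.gcd g) :
    Associated (gcd b (derivative b))
      (gcd (Finset.univ.gcd g) (Finset.univ.gcd fun i => derivative (g i))) :=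
  stmt_2_general k g b hb
end

section
/- Let g_1, ..., g_k be nonzero one-variable polynomials over a field K with d_i = deg g_i > 0, and let T_{g_1,...,g_k} be the block matrix of size (d_1 + ... + d_{k−1} + (k−1)d_k) × (d_1 + ... + d_k) built from the coefficient (Sylvester-type) matrices A^i and B^i as in the generalized resultant construction. Then the nullity of T_{g_1,...,g_k} equals deg(gcd(g_1, ..., g_k)). In particular, g_1, ..., g_k have a common root in the algebraic closure of K if and only if T_{g_1,...,g_k} does not have full column rank. -/
/-!
Write `G` for the gcd of the `g i`, and read a vector `v` as the polynomials `h_k` (from its first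
`d_k` entries) and `h_i` (from the `i`-th block), each listed from its coefficient of
`X ^ (d - 1)` down. Row block `i` of `T v` lists the coefficients of `g_i h_k + g_k h_i`, which
has degree `< d_i + d_k`, so `T v = 0` iff `g_i h_k + g_k h_i = 0` for all `i`. Then `g_k` divides
every `g_j h_k`, hence `G h_k`: writing `g_k = G u`, we get `h_k = u w` with `deg w < deg G`.
Conversely every such `w` gives the kernel vector with `h_i = -(g_i / G) w`. Since `g_k ≠ 0`,
`h_k` determines `v`, so `v ↦ h_k` maps the kernel isomorphically onto `u • K[X]_{<deg G}`.

A point `x` is a common root of the `g i` iff its minimal polynomial divides all of them, iff it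
divides `G`, iff `x` is a root of `G`; and `G ≠ 0` has a root in the algebraic closure iff
`deg G > 0`.
-/

open Polynomial
open scoped Matrix

section Degree

variable {R : Type*} [Semiring R]

theorem degree_mul_lt_add {a b : R[X]} {n d : ℕ} (ha : a.natDegree ≤ n) (hb : b.degree < d) :
    (a * b).degree < ↑(n + d) := by
  rcases eq_or_ne b 0 with rfl | hb0
  · simp
  refine (degree_mul_le_of_le (degree_le_of_natDegree_le ha) degree_le_natDegree).trans_lt ?_
  have := (natDegree_lt_iff_degree_lt hb0).2 hb
  exact_mod_cast (by omega : n + b.natDegree < n + d)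

theorem eq_zero_iff_coeff_sub_one_sub {P : R[X]} {N : ℕ} (hP : P.degree < N) :
    P = 0 ↔ ∀ p < N, P.coeff (N - 1 - p) = 0 := by
  refine ⟨fun h p _ => by rw [h, coeff_zero], fun h => Polynomial.ext fun n => ?_⟩
  rw [coeff_zero]
  by_cases hn : n < N
  · simpa [show N - 1 - (N - 1 - n) = n by omega] using h (N - 1 - n) (by omega)
  · exact coeff_eq_zero_of_degree_lt (hP.trans_le (by exact_mod_cast not_lt.1 hn))

end Degree

section DegreeMul

variable {R : Type*} [Semiring R] [NoZeroDivisors R] {G u w : R[X]}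

theorem degree_mul_lt_natDegree_mul (hw : w.degree < G.natDegree) :
    (u * w).degree < (G * u).natDegree := by
  rcases eq_or_ne w 0 with rfl | hw0
  · simp
  rcases eq_or_ne u 0 with rfl | hu0
  · simp
  have hG : G ≠ 0 := by
    rintro rfl
    exact hw0 (degree_eq_bot.1 (by simpa using hw))
  rw [← natDegree_lt_iff_degree_lt hw0] at hw
  rw [← natDegree_lt_iff_degree_lt (mul_ne_zero hu0 hw0), natDegree_mul hu0 hw0,
    natDegree_mul hG hu0]
  omega

theorem degree_lt_natDegree_of_degree_mul_lt (hu : u ≠ 0)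
    (h : (u * w).degree < (G * u).natDegree) : w.degree < G.natDegree := by
  rcases eq_or_ne w 0 with rfl | hw0
  · simp
  rw [← natDegree_lt_iff_degree_lt (mul_ne_zero hu hw0), natDegree_mul hu hw0] at h
  rw [← natDegree_lt_iff_degree_lt hw0]
  have := natDegree_mul_le (p := G) (q := u)
  omega

end DegreeMul

theorem Finset.dvd_gcd_mul_of_dvd_mul {α ι : Type*} [CommMonoidWithZero α]
    [NormalizedGCDMonoid α] {s : Finset ι} {f : ι → α} {a b : α}
    (h : ∀ i ∈ s, a ∣ f i * b) :
    a ∣ s.gcd f * b :=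
  (Finset.dvd_gcd h).trans (Finset.gcd_mul_right' s f b).dvd

section Roots

variable {K : Type*} [Field K] [DecidableEq K] {ι : Type*}

theorem aeval_finset_gcd_eq_zero_iff {A : Type*} [Ring A] [Algebra K A] (x : A) (s : Finset ι)
    (f : ι → K[X]) : aeval x (s.gcd f) = 0 ↔ ∀ i ∈ s, aeval x (f i) = 0 := by
  simp_rw [← minpoly.dvd_iff, Finset.dvd_gcd_iff]

theorem exists_forall_aeval_eq_zero_iff (L : Type*) [Field L] [IsAlgClosed L] [Algebra K L]
    {s : Finset ι} {f : ι → K[X]} (hs : s.gcd f ≠ 0) :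
    (∃ x : L, ∀ i ∈ s, aeval x (f i) = 0) ↔ 0 < (s.gcd f).natDegree := by
  simp_rw [← aeval_finset_gcd_eq_zero_iff]
  refine ⟨fun ⟨x, hx⟩ => natDegree_pos_of_aeval_root hs hx fun _ =>
    (FaithfulSMul.algebraMap_eq_zero_iff K L).1, fun h => ?_⟩
  exact IsAlgClosed.exists_aeval_eq_zero L _ (natDegree_pos_iff_degree_pos.1 h).ne'

end Roots

section RevCoeffs

variable {R : Type*} [Semiring R] {d : ℕ}

noncomputable def ofRevCoeffs (d : ℕ) : (Fin d → R) →ₗ[R] R[X] :=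
  ∑ q : Fin d, monomial (d - 1 - q) ∘ₗ LinearMap.proj q

theorem ofRevCoeffs_apply (f : Fin d → R) :
    ofRevCoeffs d f = ∑ q : Fin d, monomial (d - 1 - q) (f q) := by
  simp [ofRevCoeffs]

theorem coeff_ofRevCoeffs (f : Fin d → R) (n : ℕ) :
    (ofRevCoeffs d f).coeff n = if h : n < d then f (Fin.rev ⟨n, h⟩) else 0 := by
  rw [ofRevCoeffs_apply, finsetSum_coeff]
  simp only [coeff_monomial]
  split_ifs with h
  · have hrev (q : Fin d) : d - 1 - q = n ↔ q = Fin.rev ⟨n, h⟩ := by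
      have := q.isLt
      simp only [Fin.ext_iff, Fin.val_rev]; omega
    simp only [hrev, Finset.sum_ite_eq', Finset.mem_univ, if_true]
  · exact Finset.sum_eq_zero fun q _ => if_neg (by omega)

theorem coeff_ofRevCoeffs_rev (f : Fin d → R) (q : Fin d) :
    (ofRevCoeffs d f).coeff (Fin.rev q) = f q := by
  rw [coeff_ofRevCoeffs, dif_pos (Fin.rev q).isLt, Fin.eta, Fin.rev_rev]

theorem ofRevCoeffs_injective : Function.Injective (ofRevCoeffs (R := R) d) := fun f f' h =>
  funext fun q => by rw [← coeff_ofRevCoeffs_rev f, h, coeff_ofRevCoeffs_rev]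

theorem range_ofRevCoeffs : LinearMap.range (ofRevCoeffs (R := R) d) = degreeLT R d := by
  ext p
  rw [LinearMap.mem_range, mem_degreeLT]
  constructor
  · rintro ⟨f, rfl⟩
    refine (degree_lt_iff_coeff_zero _ _).2 fun n hn => ?_
    rw [coeff_ofRevCoeffs, dif_neg (by exact_mod_cast hn.not_gt)]
  · refine fun hp => ⟨fun q => p.coeff (Fin.rev q), Polynomial.ext fun n => ?_⟩
    rw [coeff_ofRevCoeffs]
    split_ifs with h
    · simp
    · exact (coeff_eq_zero_of_degree_lt (hp.trans_le (by exact_mod_cast not_lt.1 h))).symm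

theorem degree_ofRevCoeffs_lt (f : Fin d → R) : (ofRevCoeffs d f).degree < d :=
  mem_degreeLT.1 (range_ofRevCoeffs (R := R) ▸ LinearMap.mem_range_self _ f)

def sylvesterEntry (a : R[X]) (n p q : ℕ) : R :=
  if q ≤ p ∧ p - q ≤ n then a.coeff (n - (p - q)) else 0

theorem coeff_mul_ofRevCoeffs {a : R[X]} {n : ℕ} (ha : a.natDegree ≤ n) (f : Fin d → R)
    {p : ℕ} (hp : p < n + d) :
    (a * ofRevCoeffs d f).coeff (n + d - 1 - p) = ∑ q : Fin d, sylvesterEntry a n p q * f q := by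
  rw [ofRevCoeffs_apply, Finset.mul_sum, finsetSum_coeff]
  refine Finset.sum_congr rfl fun q _ => ?_
  rw [← C_mul_X_pow_eq_monomial, ← mul_assoc, coeff_mul_X_pow', coeff_mul_C, sylvesterEntry]
  have hq := q.isLt
  by_cases hpq : (q : ℕ) ≤ p ∧ p - q ≤ n
  · rw [if_pos (by omega), if_pos hpq]
    congr 2
    omega
  · rw [if_neg hpq, zero_mul]
    split_ifs with h
    · rw [coeff_eq_zero_of_natDegree_lt (by omega), zero_mul]
    · rfl

end RevCoeffs

section Matrix

variable {R : Type*} [Semiring R] {m : ℕ} (g : Fin (m + 1) → R[X])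

abbrev SylvesterRows := Σ i : Fin m, Fin ((g i.castSucc).natDegree + (g (Fin.last m)).natDegree)

abbrev SylvesterCols :=
  Fin ((g (Fin.last m)).natDegree) ⊕ Σ i : Fin m, Fin ((g i.castSucc).natDegree)

-- The matrix `T` with `g (Fin.last m)` as `g_k`: row block `i` is `(A^i, 0, …, B^i, …, 0)`, and
-- `sylvesterEntry` gives the entries of `A^i` and `B^i`.
def generalizedSylvester : Matrix (SylvesterRows g) (SylvesterCols g) R :=
  Matrix.of fun r => Sum.elim
    (fun q => sylvesterEntry (g r.1.castSucc) (g r.1.castSucc).natDegree r.2 q)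
    (fun c => if r.1 = c.1 then sylvesterEntry (g (Fin.last m)) (g (Fin.last m)).natDegree r.2 c.2
      else 0)

-- The polynomials `h_k` and `h_i` that a vector `v` encodes.
noncomputable def lastPoly : (SylvesterCols g → R) →ₗ[R] R[X] :=
  ofRevCoeffs _ ∘ₗ LinearMap.funLeft R R Sum.inl

noncomputable def castSuccPoly (v : SylvesterCols g → R) (i : Fin m) : R[X] :=
  ofRevCoeffs _ fun q => v (Sum.inr ⟨i, q⟩)

variable {g}

theorem generalizedSylvester_mulVec_apply (v : SylvesterCols g → R) (i : Fin m)
    (p : Fin ((g i.castSucc).natDegree + (g (Fin.last m)).natDegree)) :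
    (generalizedSylvester g *ᵥ v) ⟨i, p⟩ =
      (g i.castSucc * lastPoly g v + g (Fin.last m) * castSuccPoly g v i).coeff
        ((g i.castSucc).natDegree + (g (Fin.last m)).natDegree - 1 - p) := by
  have hp := p.isLt
  have hB := coeff_mul_ofRevCoeffs (a := g (Fin.last m)) le_rfl (fun q => v (Sum.inr ⟨i, q⟩))
    (p := p) (by omega)
  rw [add_comm (g (Fin.last m)).natDegree] at hB
  rw [coeff_add, lastPoly, LinearMap.comp_apply, coeff_mul_ofRevCoeffs le_rfl _ hp, castSuccPoly,
    hB, Matrix.mulVec, dotProduct, Fintype.sum_sum_type, ← Finset.univ_sigma_univ,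
    Finset.sum_sigma, Finset.sum_eq_single i]
  · simp [generalizedSylvester]
  · intro j _ hj
    simp [generalizedSylvester, Ne.symm hj]
  · simp

theorem generalizedSylvester_mulVec_eq_zero_iff (v : SylvesterCols g → R) :
    generalizedSylvester g *ᵥ v = 0 ↔
      ∀ i, g i.castSucc * lastPoly g v + g (Fin.last m) * castSuccPoly g v i = 0 := by
  have hdeg (i : Fin m) :
      (g i.castSucc * lastPoly g v + g (Fin.last m) * castSuccPoly g v i).degree <
        ↑((g i.castSucc).natDegree + (g (Fin.last m)).natDegree) := by
    refine (degree_add_le _ _).trans_lt (max_lt ?_ ?_)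
    · exact degree_mul_lt_add le_rfl (degree_ofRevCoeffs_lt _)
    · rw [add_comm]
      exact degree_mul_lt_add le_rfl (degree_ofRevCoeffs_lt _)
  simp only [funext_iff, Sigma.forall, generalizedSylvester_mulVec_apply, Pi.zero_apply,
    eq_zero_iff_coeff_sub_one_sub (hdeg _), Fin.forall_iff]

end Matrix

section Injective

variable {R : Type*} [CommRing R] [NoZeroDivisors R] {m : ℕ} {g : Fin (m + 1) → R[X]}

theorem injective_lastPoly_domRestrict_ker (hk : g (Fin.last m) ≠ 0) :
    Function.Injective
      ((lastPoly g).domRestrict (LinearMap.ker (generalizedSylvester g).mulVecLin)) := by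
  rw [← LinearMap.ker_eq_bot, LinearMap.ker_eq_bot']
  rintro ⟨v, hv⟩ hhead
  rw [LinearMap.domRestrict_apply] at hhead
  rw [LinearMap.mem_ker, Matrix.mulVecLin_apply, generalizedSylvester_mulVec_eq_zero_iff] at hv
  have hblock (i : Fin m) : castSuccPoly g v i = 0 := by simpa [hhead, hk] using hv i
  refine Subtype.ext (funext fun c => ?_)
  rcases c with q | ⟨i, q⟩
  · exact congrFun (ofRevCoeffs_injective (hhead.trans (map_zero _).symm)) q
  · exact congrFun (ofRevCoeffs_injective ((hblock i).trans (map_zero _).symm)) q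

end Injective

section Kernel

variable {K : Type*} [Field K] [DecidableEq K] {m : ℕ} {g : Fin (m + 1) → K[X]} {u : K[X]}

theorem exists_mul_eq_lastPoly_of_mulVec_eq_zero (hk : g (Fin.last m) ≠ 0)
    (hu : g (Fin.last m) = Finset.univ.gcd g * u) {v : SylvesterCols g → K}
    (hv : generalizedSylvester g *ᵥ v = 0) :
    ∃ w ∈ degreeLT K (Finset.univ.gcd g).natDegree, u * w = lastPoly g v := by
  rw [generalizedSylvester_mulVec_eq_zero_iff] at hv
  have hG : Finset.univ.gcd g ≠ 0 := left_ne_zero_of_mul (hu ▸ hk)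
  have hu0 : u ≠ 0 := right_ne_zero_of_mul (hu ▸ hk)
  have hdvd : g (Fin.last m) ∣ Finset.univ.gcd g * lastPoly g v := by
    refine Finset.dvd_gcd_mul_of_dvd_mul fun j _ => Fin.lastCases ?_ (fun i => ?_) j
    · exact dvd_mul_right _ _
    · exact ⟨-castSuccPoly g v i, by linear_combination hv i⟩
  rw [hu] at hdvd
  obtain ⟨w, hw⟩ := (mul_dvd_mul_iff_left hG).1 hdvd
  refine ⟨w, mem_degreeLT.2 (degree_lt_natDegree_of_degree_mul_lt hu0 ?_), hw.symm⟩
  rw [← hw, ← hu]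
  exact degree_ofRevCoeffs_lt _

theorem exists_mulVec_eq_zero_of_mul (hu : g (Fin.last m) = Finset.univ.gcd g * u) {w : K[X]}
    (hw : w ∈ degreeLT K (Finset.univ.gcd g).natDegree) :
    ∃ v, generalizedSylvester g *ᵥ v = 0 ∧ lastPoly g v = u * w := by
  rw [mem_degreeLT] at hw
  choose c hc using fun i : Fin m => Finset.gcd_dvd (f := g) (Finset.mem_univ i.castSucc)
  obtain ⟨f, hf⟩ : u * w ∈ LinearMap.range (ofRevCoeffs (g (Fin.last m)).natDegree) := by
    rw [range_ofRevCoeffs, mem_degreeLT, hu]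
    exact degree_mul_lt_natDegree_mul hw
  have hblock (i : Fin m) :
      -(c i * w) ∈ LinearMap.range (ofRevCoeffs (g i.castSucc).natDegree) := by
    rw [range_ofRevCoeffs, mem_degreeLT, degree_neg, hc i]
    exact degree_mul_lt_natDegree_mul hw
  choose f' hf' using hblock
  refine ⟨Sum.elim f fun c => f' c.1 c.2, ?_, hf⟩
  rw [generalizedSylvester_mulVec_eq_zero_iff]
  intro i
  change g i.castSucc * ofRevCoeffs _ f + g (Fin.last m) * ofRevCoeffs _ (f' i) = 0
  rw [hf, hf' i, hc i, hu]
  ring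

theorem map_lastPoly_ker_generalizedSylvester (hk : g (Fin.last m) ≠ 0)
    (hu : g (Fin.last m) = Finset.univ.gcd g * u) :
    (LinearMap.ker (generalizedSylvester g).mulVecLin).map (lastPoly g) =
      (degreeLT K (Finset.univ.gcd g).natDegree).map (LinearMap.mulLeft K u) := by
  ext h
  simp only [Submodule.mem_map, LinearMap.mem_ker, Matrix.mulVecLin_apply,
    LinearMap.mulLeft_apply]
  constructor
  · rintro ⟨v, hv, rfl⟩
    exact exists_mul_eq_lastPoly_of_mulVec_eq_zero hk hu hv
  · rintro ⟨w, hw, rfl⟩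
    exact exists_mulVec_eq_zero_of_mul hu hw

theorem finrank_ker_generalizedSylvester (hk : g (Fin.last m) ≠ 0) :
    Module.finrank K (LinearMap.ker (generalizedSylvester g).mulVecLin) =
      (Finset.univ.gcd g).natDegree := by
  obtain ⟨u, hu⟩ := Finset.gcd_dvd (f := g) (Finset.mem_univ (Fin.last m))
  have hmul : Function.Injective (LinearMap.mulLeft K u) :=
    mul_right_injective₀ (right_ne_zero_of_mul (hu ▸ hk))
  calc Module.finrank K (LinearMap.ker (generalizedSylvester g).mulVecLin)
      = Module.finrank K ((LinearMap.ker (generalizedSylvester g).mulVecLin).map (lastPoly g)) := by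
        rw [← LinearMap.finrank_range_of_inj (injective_lastPoly_domRestrict_ker hk),
          LinearMap.range_domRestrict]
    _ = Module.finrank K (degreeLT K (Finset.univ.gcd g).natDegree) := by
        rw [map_lastPoly_ker_generalizedSylvester hk hu,
          ← (Submodule.equivMapOfInjective _ hmul _).finrank_eq]
    _ = (Finset.univ.gcd g).natDegree := by
        simp [(degreeLTEquiv K _).finrank_eq]

end Kernel

theorem stmt_14_general {K : Type*} [Field K] [DecidableEq K] (m : ℕ)
    (g : Fin (m + 1) → Polynomial K) (hg : ∀ i, 0 < (g i).natDegree)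
    (T : Matrix (Σ i : Fin m, Fin ((g i.castSucc).natDegree + (g (Fin.last m)).natDegree))
      (Fin ((g (Fin.last m)).natDegree) ⊕ Σ i : Fin m, Fin ((g i.castSucc).natDegree)) K)
    (hTA : ∀ (i : Fin m) (p : Fin ((g i.castSucc).natDegree + (g (Fin.last m)).natDegree))
        (q : Fin ((g (Fin.last m)).natDegree)),
      T ⟨i, p⟩ (Sum.inl q) =
        if (q : ℕ) ≤ (p : ℕ) ∧ (p : ℕ) - (q : ℕ) ≤ (g i.castSucc).natDegree then
          (g i.castSucc).coeff ((g i.castSucc).natDegree - ((p : ℕ) - (q : ℕ)))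
        else 0)
    (hTB : ∀ (i : Fin m) (p : Fin ((g i.castSucc).natDegree + (g (Fin.last m)).natDegree))
        (j : Fin m) (q : Fin ((g j.castSucc).natDegree)),
      T ⟨i, p⟩ (Sum.inr ⟨j, q⟩) =
        if i = j ∧ (q : ℕ) ≤ (p : ℕ) ∧ (p : ℕ) - (q : ℕ) ≤ (g (Fin.last m)).natDegree then
          (g (Fin.last m)).coeff ((g (Fin.last m)).natDegree - ((p : ℕ) - (q : ℕ)))
        else 0) :
    Module.finrank K (LinearMap.ker T.mulVecLin) = (Finset.univ.gcd g).natDegree ∧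
      ((∃ x : AlgebraicClosure K, ∀ i, Polynomial.aeval x (g i) = 0) ↔
        LinearMap.ker T.mulVecLin ≠ ⊥) := by
  obtain rfl : T = generalizedSylvester g := by
    ext ⟨i, p⟩ (q | ⟨j, q⟩)
    · simp [hTA, generalizedSylvester, sylvesterEntry]
    · simp [hTB, generalizedSylvester, sylvesterEntry, ite_and]
  have hk : g (Fin.last m) ≠ 0 := ne_zero_of_natDegree_gt (hg _)
  have hG : Finset.univ.gcd g ≠ 0 :=
    fun h => hk (Finset.gcd_eq_zero_iff.1 h _ (Finset.mem_univ _))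
  refine ⟨finrank_ker_generalizedSylvester hk, ?_⟩
  rw [Ne, ← Submodule.finrank_eq_zero, finrank_ker_generalizedSylvester hk, ← Ne,
    ← Nat.pos_iff_ne_zero,    ← exists_forall_aeval_eq_zero_iff (AlgebraicClosure K) hG]
  simp

/-- The generalized resultant: for nonzero polynomials `g 0, ..., g m` (with `g (Fin.last m)`
playing the role of `g_k`) of positive degrees, the block matrix `T` built from the
Sylvester-type coefficient blocks `A^i` (in the first block column) and `B^i` (in the
`(i+1)`-st block column) has nullity equal to `deg (gcd (g 0, ..., g m))`; in particular the
`g i` have a common root in the algebraic closure iff `T` does not have full column rank,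
i.e. iff its kernel is nonzero. -/
theorem stmt_14 {K : Type*} [Field K] [DecidableEq K] (m : ℕ) (hm : 0 < m)
    (g : Fin (m + 1) → Polynomial K) (hg : ∀ i, 0 < (g i).natDegree)
    (T : Matrix (Σ i : Fin m, Fin ((g i.castSucc).natDegree + (g (Fin.last m)).natDegree))
      (Fin ((g (Fin.last m)).natDegree) ⊕ Σ i : Fin m, Fin ((g i.castSucc).natDegree)) K)
    (hTA : ∀ (i : Fin m) (p : Fin ((g i.castSucc).natDegree + (g (Fin.last m)).natDegree))
        (q : Fin ((g (Fin.last m)).natDegree)),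
      T ⟨i, p⟩ (Sum.inl q) =
        if (q : ℕ) ≤ (p : ℕ) ∧ (p : ℕ) - (q : ℕ) ≤ (g i.castSucc).natDegree then
          (g i.castSucc).coeff ((g i.castSucc).natDegree - ((p : ℕ) - (q : ℕ)))
        else 0)
    (hTB : ∀ (i : Fin m) (p : Fin ((g i.castSucc).natDegree + (g (Fin.last m)).natDegree))
        (j : Fin m) (q : Fin ((g j.castSucc).natDegree)),
      T ⟨i, p⟩ (Sum.inr ⟨j, q⟩) =
        if i = j ∧ (q : ℕ) ≤ (p : ℕ) ∧ (p : ℕ) - (q : ℕ) ≤ (g (Fin.last m)).natDegree then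
          (g (Fin.last m)).coeff ((g (Fin.last m)).natDegree - ((p : ℕ) - (q : ℕ)))
        else 0) :
    Module.finrank K (LinearMap.ker T.mulVecLin) = (Finset.univ.gcd g).natDegree ∧
      ((∃ x : AlgebraicClosure K, ∀ i, Polynomial.aeval x (g i) = 0) ↔
        LinearMap.ker T.mulVecLin ≠ ⊥) :=
  stmt_14_general m g hg T hTA hTB
end
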